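/- For every N ∈ ℕ, the control operator W^N maps the subspace F^N_0 = {f ∈ ℝ^N : f_0 = 0} bijectively onto the subspace {h ∈ ℝ^N : h_N = 0}. -/

import Mathlib

/-- Solution `u^f` of the semi-infinite dynamical system. -/
def solS (a b f : ℕ → ℝ) : ℕ → ℕ → ℝ
  | n, 0 => if n = 0 then f 0 else 0
  | n, 1 =>
      if n = 0 then f 1
      else a n * solS a b f (n + 1) 0 + a (n - 1) * solS a b f (n - 1) 0
        + b n * solS a b f n 0
  | n, t + 2 =>
      if n = 0 then f (t + 2)
      else a n * solS a b f (n + 1) (t + 1) + a (n - 1) * solS a b f (n - 1) (t + 1)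
        + b n * solS a b f n (t + 1) - solS a b f n t
  termination_by n t => t

/-- Extension of a finite control by zero. -/
def ctrl (T : ℕ) (f : Fin T → ℝ) : ℕ → ℝ := fun t => if h : t < T then f ⟨t, h⟩ else 0

/-!
The control operator is triangular. A control vanishing before time `s` produces a wave that
has not reached site `n` before time `n + s` (finite speed of propagation), and at time `n + s`
its value there is `a₀ ⋯ a_{n-1} · f_s`. Hence `W^N` is a linear map whose matrix is triangular
with nonzero diagonal, so it is bijective, and its last coordinate is `a₀ ⋯ a_{N-1} · f₀`, which
vanishes exactly when `f₀` does.
-/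

open Finset

section Solution

variable {a b f : ℕ → ℝ}

theorem solS_zero_left (t : ℕ) : solS a b f 0 t = f t := by
  rcases t with _ | _ | t <;> simp [solS]

theorem solS_succ_zero (m : ℕ) : solS a b f (m + 1) 0 = 0 := by
  simp [solS]

/-- At `t = 0` the truncated `t - 1` is `0`, and `solS_succ_zero` makes the last term vanish,
as the initial condition `u_{n,-1} = 0` requires. -/
theorem solS_succ_succ (m t : ℕ) :
    solS a b f (m + 1) (t + 1) = a (m + 1) * solS a b f (m + 2) t + a m * solS a b f m t
      + b (m + 1) * solS a b f (m + 1) t - solS a b f (m + 1) (t - 1) := by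
  rcases t with _ | t <;> simp [solS]

theorem solS_add (g : ℕ → ℝ) (n t : ℕ) :
    solS a b (f + g) n t = solS a b f n t + solS a b g n t := by
  induction t using Nat.strong_induction_on generalizing n with
  | _ t ih =>
    rcases n, t with ⟨_ | m, _ | t⟩
    · simp [solS_zero_left]
    · simp [solS_zero_left]
    · simp [solS_succ_zero]
    · simp only [solS_succ_succ, ih t (by omega), ih (t - 1) (by omega)]
      ring

theorem solS_smul (c : ℝ) (n t : ℕ) : solS a b (c • f) n t = c * solS a b f n t := by
  induction t using Nat.strong_induction_on generalizing n with
  | _ t ih =>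
    rcases n, t with ⟨_ | m, _ | t⟩
    · simp [solS_zero_left]
    · simp [solS_zero_left]
    · simp [solS_succ_zero]
    · simp only [solS_succ_succ, ih t (by omega), ih (t - 1) (by omega)]
      ring

theorem solS_eq_zero_of_lt_add {s : ℕ} (hf : ∀ t < s, f t = 0) {n t : ℕ} (ht : t < n + s) :
    solS a b f n t = 0 := by
  induction t using Nat.strong_induction_on generalizing n with
  | _ t ih =>
    rcases n, t with ⟨_ | m, _ | t⟩
    · simpa [solS_zero_left] using hf 0 (by omega)
    · simpa [solS_zero_left] using hf (t + 1) (by omega)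
    · exact solS_succ_zero m
    · rw [solS_succ_succ, ih t (by omega) (by omega), ih t (by omega) (by omega),
        ih t (by omega) (by omega), ih (t - 1) (by omega) (by omega)]
      ring

theorem solS_add_eq_prod_mul {s : ℕ} (hf : ∀ t < s, f t = 0) (n : ℕ) :
    solS a b f n (n + s) = (∏ i ∈ range n, a i) * f s := by
  induction n with
  | zero => simp [solS_zero_left]
  | succ m ih =>
    rw [show m + 1 + s = m + s + 1 by omega, solS_succ_succ, ih,
      solS_eq_zero_of_lt_add hf (by omega), solS_eq_zero_of_lt_add hf (n := m + 1) (by omega),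
      solS_eq_zero_of_lt_add hf (n := m + 1) (by omega), prod_range_succ]
    ring

end Solution

section ControlOperator

variable {N : ℕ}

theorem ctrl_add (f g : Fin N → ℝ) : ctrl N (f + g) = ctrl N f + ctrl N g := by
  ext t
  by_cases ht : t < N <;> simp [ctrl, ht]

theorem ctrl_smul (c : ℝ) (f : Fin N → ℝ) : ctrl N (c • f) = c • ctrl N f := by
  ext t
  by_cases ht : t < N <;> simp [ctrl, ht]

theorem ctrl_of_le (f : Fin N → ℝ) {t : ℕ} (ht : N ≤ t) : ctrl N f t = 0 := by
  simp [ctrl, Nat.not_lt.mpr ht]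

theorem ctrl_val (f : Fin N → ℝ) (i : Fin N) : ctrl N f i = f i := by
  simp [ctrl]

def controlOperator (a b : ℕ → ℝ) (N : ℕ) : (Fin N → ℝ) →ₗ[ℝ] (Fin N → ℝ) where
  toFun f i := solS a b (ctrl N f) (i + 1) N
  map_add' f g := by ext i; simp [ctrl_add, solS_add]
  map_smul' c f := by ext i; simp [ctrl_smul, solS_smul]

variable {a b : ℕ → ℝ}

theorem controlOperator_apply (f : Fin N → ℝ) (i : Fin N) {s : ℕ} (hs : i + 1 + s = N)
    (hf : ∀ t < s, ctrl N f t = 0) :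
    controlOperator a b N f i = (∏ j ∈ range (i + 1), a j) * ctrl N f s := by
  rw [← solS_add_eq_prod_mul hf, hs]
  rfl

theorem controlOperator_apply_last (hN : 0 < N) (f : Fin N → ℝ) :
    controlOperator a b N f ⟨N - 1, by omega⟩ = (∏ j ∈ range N, a j) * f ⟨0, hN⟩ := by
  rw [controlOperator_apply f _ (s := 0) (by simp; omega) (by simp), Nat.sub_add_cancel hN]
  exact congrArg _ (ctrl_val f ⟨0, hN⟩)

theorem controlOperator_injective (ha : ∀ n, a n ≠ 0) :
    Function.Injective (controlOperator a b N) := by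
  refine (injective_iff_map_eq_zero _).mpr fun f hWf => ?_
  have hctrl : ∀ s, ctrl N f s = 0 := by
    intro s
    induction s using Nat.strong_induction_on with
    | _ s ih =>
      obtain hsN | hNs := Nat.lt_or_ge s N
      · have h := controlOperator_apply (a := a) (b := b) f ⟨N - s - 1, by omega⟩
          (by simp; omega) ih
        rw [hWf] at h
        exact (mul_eq_zero.mp h.symm).resolve_left (prod_ne_zero_iff.mpr fun j _ => ha j)
      · exact ctrl_of_le f hNs
  ext i
  simpa [ctrl_val] using hctrl i

end ControlOperator

/-- the control operator `W^N` maps `F^N_0 = {f : f_0 = 0}` bijectively onto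
`{h : h_N = 0}`. -/
theorem control_operator_bijOn_zero_subspace
    (N : ℕ) (hN : 1 ≤ N) (a b : ℕ → ℝ) (hapos : ∀ n, 0 < a n) :
    Set.BijOn
      (fun f : Fin N → ℝ => fun n : Fin N => solS a b (ctrl N f) ((n : ℕ) + 1) N)
      {f : Fin N → ℝ | f ⟨0, by omega⟩ = 0}
      {h : Fin N → ℝ | h ⟨N - 1, by omega⟩ = 0} := by
  change Set.BijOn (controlOperator a b N) _ _
  have ha : ∀ n, a n ≠ 0 := fun n => (hapos n).ne'
  have hinj := controlOperator_injective (b := b) (N := N) ha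
  have hlast := controlOperator_apply_last (a := a) (b := b) hN
  have hprod : ∏ j ∈ range N, a j ≠ 0 := prod_ne_zero_iff.mpr fun j _ => ha j
  refine ⟨fun f (hf : f _ = 0) => ?_, hinj.injOn, fun h (hh : h _ = 0) => ?_⟩
  · rw [Set.mem_ofPred_eq, hlast, hf, mul_zero]
  · obtain ⟨f, rfl⟩ := LinearMap.injective_iff_surjective.mp hinj h
    rw [hlast] at hh
    exact ⟨f, (mul_eq_zero.mp hh).resolve_left hprod, rfl⟩
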